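/- Let p and p̂ be probability vectors on {1,…,M} with all entries strictly positive, and let the channel densities f_i and output mixtures f^p, f^{p̂} be as in the context. Define g2(p) = ∑_{i=1}^M p_i ∫ f_i(y)·log( f^p(y) / (f_i(y)·p_i) ) dy and g2'(p,p̂) = ∑_{i=1}^M p_i ∫ f_i(y)·log( f^{p̂}(y) / (f_i(y)·p̂_i) ) dy. If p ≠ p̂, then the inequality is strict: g2'(p,p̂) > g2(p). -/

import Mathlib

/-!
At every output `y`, the integrand of `g₂'(p, p̂) - g₂(p)` is
`∑ᵢ pᵢ fᵢ(y) log (pᵢ f^{p̂}(y) / (p̂ᵢ f^p(y))) / log 2`, i.e. `f^p(y)` times the Kullback–Leibler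
divergence between the posteriors `pᵢ fᵢ(y) / f^p(y)` and `p̂ᵢ fᵢ(y) / f^{p̂}(y)`. These can only
coincide if `p / p̂` is constant, hence `p = p̂`; so the integrand is strictly positive everywhere
and its integral is positive. Each integrand `fᵢ log (f^q / (qᵢ fᵢ))` lies between `0` and
`f^q / qᵢ` (as `log x ≤ x`), so integrability reduces to that of the Gaussian mixtures `fᵢ`.
-/

open MeasureTheory

/-- Conditional density of the post-SIC received signal given symbol `i`:
a finite Gaussian mixture over the residual multiuser-interference values `b k`
with weights `w k`, signal points `μ_i = h·α·Δ·i` and noise variance `σ²`. -/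
noncomputable def condDensity (σ h α Δ : ℝ) (K : ℕ) (w b : ℕ → ℝ)
    (i : ℕ) (y : ℝ) : ℝ :=
  ∑ k ∈ Finset.Icc 1 K,
    w k * (2 * Real.pi * σ ^ 2) ^ (-(1 / 2 : ℝ)) *
      Real.exp (-(y - h * α * Δ * (i : ℝ) - b k) ^ 2 / (2 * σ ^ 2))

/-- Output mixture density `f^q(y) = ∑ᵢ qᵢ fᵢ(y)`. -/
noncomputable def outMix (M : ℕ) (f : ℕ → ℝ → ℝ) (q : ℕ → ℝ) (y : ℝ) : ℝ :=
  ∑ i ∈ Finset.Icc 1 M, q i * f i y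

/-- `g2Fun M f p q = ∑ᵢ pᵢ ∫ fᵢ(y) log₂( f^q(y) / (fᵢ(y) qᵢ) ) dy`;
`g2Fun M f p p` is `g₂(p)` and `g2Fun M f p p̂` is the surrogate `g₂'(p, p̂)`. -/
noncomputable def g2Fun (M : ℕ) (f : ℕ → ℝ → ℝ) (p q : ℕ → ℝ) : ℝ :=
  ∑ i ∈ Finset.Icc 1 M,
    p i * ∫ y : ℝ, f i y * Real.logb 2 (outMix M f q y / (f i y * q i))

open Finset Real ProbabilityTheory InformationTheory

lemma mul_klFun_div (x : ℝ) {z : ℝ} (hz : z ≠ 0) :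
    z * klFun (x / z) = x * log (x / z) + z - x := by
  rw [klFun_apply]
  field_simp

theorem sum_mul_log_div_pos {ι : Type*} {s : Finset ι} {x z : ι → ℝ}
    (hx : ∀ i ∈ s, 0 < x i) (hz : ∀ i ∈ s, 0 < z i) (hsum : ∑ i ∈ s, z i ≤ ∑ i ∈ s, x i)
    (hne : ∃ i ∈ s, x i ≠ z i) :
    0 < ∑ i ∈ s, x i * log (x i / z i) := by
  obtain ⟨j, hj, hxz⟩ := hne
  have hkl : 0 < ∑ i ∈ s, z i * klFun (x i / z i) := by
    refine sum_pos' (fun i hi => mul_nonneg (hz i hi).le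
      (klFun_nonneg (div_pos (hx i hi) (hz i hi)).le)) ⟨j, hj, mul_pos (hz j hj) ?_⟩
    refine (klFun_nonneg (div_pos (hx j hj) (hz j hj)).le).lt_of_ne' ?_
    rw [Ne, klFun_eq_zero_iff (div_pos (hx j hj) (hz j hj)).le, div_eq_one_iff_eq (hz j hj).ne']
    exact hxz
  rw [sum_congr rfl fun i hi => mul_klFun_div (x i) (hz i hi).ne', sum_sub_distrib,
    sum_add_distrib] at hkl
  linarith

lemma exists_ne_mul_of_sum_eq {ι : Type*} {s : Finset ι} {p q : ι → ℝ}
    (hsum : ∑ i ∈ s, p i = ∑ i ∈ s, q i) (hq : ∑ i ∈ s, q i ≠ 0)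
    (hne : ∃ i ∈ s, p i ≠ q i) (r : ℝ) : ∃ i ∈ s, p i ≠ r * q i := by
  by_contra! hpr
  have hr : r = 1 := by
    rw [sum_congr rfl hpr, ← mul_sum] at hsum
    exact (mul_eq_right₀ hq).mp hsum
  obtain ⟨i, hi, hpq⟩ := hne
  exact hpq (by rw [hpr i hi, hr, one_mul])

theorem sum_mul_logb_sub_pos {ι : Type*} {s : Finset ι} {a p q : ι → ℝ}
    (ha : ∀ i ∈ s, 0 < a i) (hp : ∀ i ∈ s, 0 < p i) (hq : ∀ i ∈ s, 0 < q i)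
    (hsum : ∑ i ∈ s, p i = ∑ i ∈ s, q i) (hne : ∃ i ∈ s, p i ≠ q i) :
    0 < ∑ i ∈ s, p i * (a i * logb 2 ((∑ j ∈ s, q j * a j) / (a i * q i))
      - a i * logb 2 ((∑ j ∈ s, p j * a j) / (a i * p i))) := by
  obtain ⟨j, hj, -⟩ := id hne
  set P := ∑ j ∈ s, p j * a j
  set Q := ∑ j ∈ s, q j * a j
  have hP : 0 < P := sum_pos (fun i hi => mul_pos (hp i hi) (ha i hi)) ⟨j, hj⟩
  have hQ : 0 < Q := sum_pos (fun i hi => mul_pos (hq i hi) (ha i hi)) ⟨j, hj⟩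
  have hterm : ∀ i ∈ s, p i * (a i * logb 2 (Q / (a i * q i)) - a i * logb 2 (P / (a i * p i)))
      = p i * a i * log (p i * a i / (q i * a i * (P / Q))) / log 2 := by
    intro i hi
    have := ha i hi; have := hp i hi; have := hq i hi
    rw [← mul_sub, ← logb_div (by positivity) (by positivity), logb]
    field_simp
  rw [sum_congr rfl hterm, ← sum_div]
  refine div_pos (sum_mul_log_div_pos (fun i hi => mul_pos (hp i hi) (ha i hi))
    (fun i hi => by have := ha i hi; have := hq i hi; positivity) ?_ ?_) (log_pos one_lt_two)
  · rw [← sum_mul]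
    exact (mul_div_cancel₀ P hQ.ne').le
  · obtain ⟨i, hi, hpi⟩ := exists_ne_mul_of_sum_eq hsum
      (sum_pos hq ⟨j, hj⟩).ne' hne (P / Q)
    refine ⟨i, hi, fun h => hpi (mul_right_cancel₀ (ha i hi).ne' ?_)⟩
    rw [h]; ring

section Channel

variable {M : ℕ} {f : ℕ → ℝ → ℝ}

lemma mul_le_outMix {q : ℕ → ℝ} (hf : ∀ i y, 0 < f i y) (hq : ∀ i ∈ Icc 1 M, 0 < q i)
    {i : ℕ} (hi : i ∈ Icc 1 M) (y : ℝ) : q i * f i y ≤ outMix M f q y :=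
  single_le_sum (f := fun j => q j * f j y)
    (fun j hj => (mul_pos (hq j hj) (hf j y)).le) hi

lemma integrable_outMix (hf : ∀ i, Integrable (f i)) (q : ℕ → ℝ) :
    Integrable (outMix M f q) := by
  unfold outMix
  exact integrable_finsetSum _ fun i _ => (hf i).const_mul (q i)

lemma integrable_mul_logb_outMix_div (hf_pos : ∀ i y, 0 < f i y)
    (hf_int : ∀ i, Integrable (f i)) {q : ℕ → ℝ} (hq : ∀ i ∈ Icc 1 M, 0 < q i)
    {i : ℕ} (hi : i ∈ Icc 1 M) :
    Integrable (fun y => f i y * logb 2 (outMix M f q y / (f i y * q i))) := by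
  refine (((integrable_outMix (M := M) hf_int q).div_const (q i)).div_const (log 2)).mono' ?_ ?_
  · have := fun j => (hf_int j).aemeasurable
    unfold outMix logb
    fun_prop
  · refine Filter.Eventually.of_forall fun y => ?_
    have hfi := hf_pos i y
    have hqi := hq i hi
    have hratio : 1 ≤ outMix M f q y / (f i y * q i) := by
      rw [one_le_div (by positivity), mul_comm]
      exact mul_le_outMix hf_pos hq hi y
    rw [Real.norm_of_nonneg (mul_nonneg hfi.le (logb_nonneg one_lt_two hratio)), logb,
      ← mul_div_assoc, div_le_div_iff_of_pos_right (log_pos one_lt_two)]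
    calc f i y * log (outMix M f q y / (f i y * q i))
        ≤ f i y * (outMix M f q y / (f i y * q i)) :=
          mul_le_mul_of_nonneg_left (log_le_self (by linarith)) hfi.le
      _ = outMix M f q y / q i := by field_simp

lemma g2Fun_sub_g2Fun {p q q' : ℕ → ℝ}
    (hq : ∀ i ∈ Icc 1 M, Integrable (fun y => f i y * logb 2 (outMix M f q y / (f i y * q i))))
    (hq' : ∀ i ∈ Icc 1 M,
      Integrable (fun y => f i y * logb 2 (outMix M f q' y / (f i y * q' i)))) :
    g2Fun M f p q - g2Fun M f p q' = ∫ y, ∑ i ∈ Icc 1 M, p i *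
      (f i y * logb 2 (outMix M f q y / (f i y * q i))
        - f i y * logb 2 (outMix M f q' y / (f i y * q' i))) := by
  have hint : ∀ i ∈ Icc 1 M, Integrable (fun y => p i *
      (f i y * logb 2 (outMix M f q y / (f i y * q i))
        - f i y * logb 2 (outMix M f q' y / (f i y * q' i)))) :=
    fun i hi => ((hq i hi).sub (hq' i hi)).const_mul _
  rw [integral_finsetSum _ hint, g2Fun, g2Fun, ← sum_sub_distrib]
  refine sum_congr rfl fun i hi => ?_
  rw [integral_const_mul, integral_sub (hq i hi) (hq' i hi), mul_sub]

end Channel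

lemma integral_pos_of_forall_pos {α : Type*} [MeasurableSpace α] {μ : Measure α} [NeZero μ]
    {f : α → ℝ} (hf : Integrable f μ) (hpos : ∀ x, 0 < f x) : 0 < ∫ x, f x ∂μ := by
  have hsupp : Function.support f = Set.univ := Set.eq_univ_of_forall fun x => (hpos x).ne'
  rw [integral_pos_iff_support_of_nonneg (fun x => (hpos x).le) hf, hsupp]
  exact Measure.measure_univ_pos.mpr (NeZero.ne μ)

theorem g2Fun_lt_g2Fun {M : ℕ} {f : ℕ → ℝ → ℝ} (hf_pos : ∀ i y, 0 < f i y)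
    (hf_int : ∀ i, Integrable (f i)) {p q : ℕ → ℝ} (hp : ∀ i ∈ Icc 1 M, 0 < p i)
    (hq : ∀ i ∈ Icc 1 M, 0 < q i) (hsum : ∑ i ∈ Icc 1 M, p i = ∑ i ∈ Icc 1 M, q i)
    (hne : ∃ i ∈ Icc 1 M, p i ≠ q i) :
    g2Fun M f p p < g2Fun M f p q := by
  have hp_int := fun i (hi : i ∈ Icc 1 M) => integrable_mul_logb_outMix_div hf_pos hf_int hp hi
  have hq_int := fun i (hi : i ∈ Icc 1 M) => integrable_mul_logb_outMix_div hf_pos hf_int hq hi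
  rw [← sub_pos, g2Fun_sub_g2Fun hq_int hp_int]
  refine integral_pos_of_forall_pos
    (integrable_finsetSum _ fun i hi => ((hq_int i hi).sub (hp_int i hi)).const_mul _)
    fun y => ?_
  exact sum_mul_logb_sub_pos (fun i _ => hf_pos i y) hp hq hsum hne

lemma condDensity_eq_sum_gaussianPDFReal (σ h α Δ : ℝ) (K : ℕ) (w b : ℕ → ℝ) (i : ℕ) :
    condDensity σ h α Δ K w b i = fun y => ∑ k ∈ Icc 1 K,
      w k * gaussianPDFReal (h * α * Δ * i + b k) (σ ^ 2).toNNReal y := by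
  ext y
  refine sum_congr rfl fun k _ => ?_
  rw [gaussianPDFReal_def, Real.coe_toNNReal _ (sq_nonneg σ), sqrt_eq_rpow,
    ← rpow_neg (by positivity), mul_assoc, sub_sub]

lemma condDensity_pos {σ : ℝ} (hσ : 0 < σ) (h α Δ : ℝ) {K : ℕ} {w : ℕ → ℝ}
    (hw : ∀ k ∈ Icc 1 K, 0 ≤ w k) (hwsum : ∑ k ∈ Icc 1 K, w k = 1) (b : ℕ → ℝ) (i : ℕ)
    (y : ℝ) : 0 < condDensity σ h α Δ K w b i y := by
  obtain ⟨k, hk, hwk⟩ : ∃ k ∈ Icc 1 K, 0 < w k :=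
    exists_lt_of_sum_lt (by rw [hwsum, sum_const_zero]; exact one_pos)
  have hv : (σ ^ 2).toNNReal ≠ 0 := (Real.toNNReal_pos.mpr (by positivity)).ne'
  rw [condDensity_eq_sum_gaussianPDFReal]
  exact sum_pos' (fun j hj => mul_nonneg (hw j hj) (gaussianPDFReal_nonneg _ _ _))
    ⟨k, hk, mul_pos hwk (gaussianPDFReal_pos _ _ _ hv)⟩

lemma integrable_condDensity (σ h α Δ : ℝ) (K : ℕ) (w b : ℕ → ℝ) (i : ℕ) :
    Integrable (condDensity σ h α Δ K w b i) := by
  rw [condDensity_eq_sum_gaussianPDFReal]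
  exact integrable_finsetSum _ fun k _ => (integrable_gaussianPDFReal _ _).const_mul (w k)

theorem surrogate_dominates_strict_general
    (M : ℕ) (σ h α Δ : ℝ)
    (hσ : 0 < σ)
    (K : ℕ) (w b : ℕ → ℝ)
    (hw : ∀ k ∈ Finset.Icc 1 K, 0 ≤ w k)
    (hwsum : ∑ k ∈ Finset.Icc 1 K, w k = 1)
    (p phat : ℕ → ℝ)
    (hp : ∀ i ∈ Finset.Icc 1 M, 0 < p i)
    (hpsum : ∑ i ∈ Finset.Icc 1 M, p i = 1)
    (hphat : ∀ i ∈ Finset.Icc 1 M, 0 < phat i)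
    (hphatsum : ∑ i ∈ Finset.Icc 1 M, phat i = 1)
    (hne : ∃ i ∈ Finset.Icc 1 M, p i ≠ phat i)
    (f : ℕ → ℝ → ℝ) (hf : f = condDensity σ h α Δ K w b) :
    g2Fun M f p p < g2Fun M f p phat := by
  subst hf
  exact g2Fun_lt_g2Fun (condDensity_pos hσ h α Δ hw hwsum b)
    (integrable_condDensity σ h α Δ K w b) hp hphat (hpsum.trans hphatsum.symm) hne

/-- **Strict surrogate domination.** If `p ≠ p̂` (as probability vectors on `{1,…,M}`),
then `g₂'(p, p̂) > g₂(p)`. -/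
theorem surrogate_dominates_strict
    (M : ℕ) (hM : 1 ≤ M) (σ h α Δ : ℝ)
    (hσ : 0 < σ) (hh : 0 < h) (hα : 0 < α) (hΔ : 0 < Δ)
    (K : ℕ) (hK : 1 ≤ K) (w b : ℕ → ℝ)
    (hw : ∀ k ∈ Finset.Icc 1 K, 0 ≤ w k)
    (hwsum : ∑ k ∈ Finset.Icc 1 K, w k = 1)
    (p phat : ℕ → ℝ)
    (hp : ∀ i ∈ Finset.Icc 1 M, 0 < p i)
    (hpsum : ∑ i ∈ Finset.Icc 1 M, p i = 1)
    (hphat : ∀ i ∈ Finset.Icc 1 M, 0 < phat i)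
    (hphatsum : ∑ i ∈ Finset.Icc 1 M, phat i = 1)
    (hne : ∃ i ∈ Finset.Icc 1 M, p i ≠ phat i)
    (f : ℕ → ℝ → ℝ) (hf : f = condDensity σ h α Δ K w b) :
    g2Fun M f p p < g2Fun M f p phat :=
  surrogate_dominates_strict_general M σ h α Δ hσ K w b hw hwsum p phat hp hpsum hphat hphatsum hne
    f hf
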